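/- Let R > 0 and Λ > 0, and let Φ be a radial steady state with parameters (R, Λ). Suppose μ ∈ ℝ and U : ℝ → ℝ is continuously differentiable on [0, R], twice continuously differentiable on (0, R), satisfies −U''(r) − U'(r)/r = μ·U(r) for every r ∈ (0, R), with U'(0) = 0, U(R) = 0, and U(r) > 0 for every r ∈ [0, R). Then Λ ≤ 1 + μ. -/

import Mathlib

/-!
A positive radial Dirichlet eigenfunction `U` has `μ > 0`: otherwise the flux `r U'(r)` is
nondecreasing from its value `0` at the centre, so `U` is nondecreasing and cannot vanish at `R`.
For the bound, compare `Φ` with `U` through the radial Wronskian `W = r (Φ' U - Φ U')`. It vanishes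
at `r = 0` and at `r = R`, and the two equations give `W' = r U ((1 + μ) Φ - Λ e^Φ)`. If
`1 + μ < Λ`, then `(1 + μ) x < Λ e^x` for all real `x`, so `W` would be strictly decreasing.
-/

/-- `Φ` is a radial steady state with parameters `(R, Λ)`: it is twice continuously
differentiable on `[0, R]`, satisfies `-Φ''(r) - Φ'(r)/r + Φ(r) = Λ exp(Φ(r))` on `(0, R)`,
and `Φ'(0) = 0`, `Φ(R) = 0`. -/
def IsRadialSteadyState (R Λ : ℝ) (Φ : ℝ → ℝ) : Prop :=
  ContDiffOn ℝ 2 Φ (Set.Icc 0 R) ∧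
  (∀ r ∈ Set.Ioo 0 R,
    -(deriv (deriv Φ) r) - deriv Φ r / r + Φ r = Λ * Real.exp (Φ r)) ∧
  deriv Φ 0 = 0 ∧ Φ R = 0

open Set

theorem mul_lt_mul_exp_of_lt {c Λ : ℝ} (hc : 0 ≤ c) (hcΛ : c < Λ) (x : ℝ) :
    c * x < Λ * Real.exp x :=
  calc c * x ≤ c * Real.exp x := by gcongr; linarith [Real.add_one_le_exp x]
    _ < Λ * Real.exp x := by gcongr

theorem ContDiffAt.hasDerivAt_deriv {𝕜 F : Type*} [NontriviallyNormedField 𝕜]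
    [NormedAddCommGroup F] [NormedSpace 𝕜 F] {f : 𝕜 → F} {x : 𝕜} (hf : ContDiffAt 𝕜 2 f x) :
    HasDerivAt (deriv f) (deriv (deriv f) x) x :=
  ((hf.derivWithin (m := 1) (by norm_num)).differentiableAt one_ne_zero).hasDerivAt

section MonotoneIcc

variable {f f' : ℝ → ℝ} {a b : ℝ}

theorem monotoneOn_Icc_of_hasDerivAt_nonneg (hf : ContinuousOn f (Icc a b))
    (hf' : ∀ x ∈ Ioo a b, HasDerivAt f (f' x) x) (hf'₀ : ∀ x ∈ Ioo a b, 0 ≤ f' x) :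
    MonotoneOn f (Icc a b) :=
  monotoneOn_of_hasDerivWithinAt_nonneg (convex_Icc a b) hf
    (by simpa only [interior_Icc] using fun x hx ↦ (hf' x hx).hasDerivWithinAt)
    (by simpa only [interior_Icc] using hf'₀)

theorem strictAntiOn_Icc_of_hasDerivAt_neg (hf : ContinuousOn f (Icc a b))
    (hf' : ∀ x ∈ Ioo a b, HasDerivAt f (f' x) x) (hf'₀ : ∀ x ∈ Ioo a b, f' x < 0) :
    StrictAntiOn f (Icc a b) :=
  strictAntiOn_of_hasDerivWithinAt_neg (convex_Icc a b) hf
    (by simpa only [interior_Icc] using fun x hx ↦ (hf' x hx).hasDerivWithinAt)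
    (by simpa only [interior_Icc] using hf'₀)

end MonotoneIcc

/-- The flux `r f'(r)` on `[0, R]`. Taking the derivative within `[0, R]` makes it continuous up
to both endpoints when `f` is `C¹` on `[0, R]`. -/
noncomputable def radialFlux (R : ℝ) (f : ℝ → ℝ) (r : ℝ) : ℝ := r * derivWithin f (Icc 0 R) r

section RadialFlux

variable {R r : ℝ} {f g : ℝ → ℝ}

@[simp]
theorem radialFlux_zero : radialFlux R f 0 = 0 := zero_mul _

theorem radialFlux_of_mem_Ioo (hr : r ∈ Ioo 0 R) : radialFlux R f r = r * deriv f r := by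
  rw [radialFlux, derivWithin_of_mem_nhds (Icc_mem_nhds hr.1 hr.2)]

theorem continuousOn_radialFlux (hR : 0 < R) (hf : ContDiffOn ℝ 1 f (Icc 0 R)) :
    ContinuousOn (radialFlux R f) (Icc 0 R) :=
  continuousOn_id.mul (hf.continuousOn_derivWithin (uniqueDiffOn_Icc hR) le_rfl)

theorem hasDerivAt_radialFlux (hf : ContDiffOn ℝ 2 f (Ioo 0 R)) (hr : r ∈ Ioo 0 R) :
    HasDerivAt (radialFlux R f) (r * deriv (deriv f) r + deriv f r) r := by
  have h := (hasDerivAt_id r).mul (hf.contDiffAt (Ioo_mem_nhds hr.1 hr.2)).hasDerivAt_deriv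
  refine (h.congr_of_eventuallyEq ?_).congr_deriv (by simp only [id, one_mul, add_comm])
  filter_upwards [Ioo_mem_nhds hr.1 hr.2] with s hs using radialFlux_of_mem_Ioo hs

theorem hasDerivAt_radialWronskian (hf : ContDiffOn ℝ 2 f (Ioo 0 R))
    (hg : ContDiffOn ℝ 2 g (Ioo 0 R)) (hr : r ∈ Ioo 0 R) :
    HasDerivAt (fun s ↦ radialFlux R f s * g s - f s * radialFlux R g s)
      (g r * (r * deriv (deriv f) r + deriv f r) - f r * (r * deriv (deriv g) r + deriv g r))
      r := by
  have hdiff {h : ℝ → ℝ} (hh : ContDiffOn ℝ 2 h (Ioo 0 R)) : HasDerivAt h (deriv h r) r :=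
    ((hh.contDiffAt (Ioo_mem_nhds hr.1 hr.2)).differentiableAt two_ne_zero).hasDerivAt
  refine (((hasDerivAt_radialFlux hf hr).mul (hdiff hg)).sub
    ((hdiff hf).mul (hasDerivAt_radialFlux hg hr))).congr_deriv ?_
  rw [radialFlux_of_mem_Ioo hr, radialFlux_of_mem_Ioo hr]
  ring

end RadialFlux

theorem pos_of_radial_dirichlet_eigenfunction {R μ : ℝ} {U : ℝ → ℝ} (hR : 0 < R)
    (hU1 : ContDiffOn ℝ 1 U (Icc 0 R)) (hU2 : ContDiffOn ℝ 2 U (Ioo 0 R))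
    (hUeq : ∀ r ∈ Ioo 0 R, -(deriv (deriv U) r) - deriv U r / r = μ * U r)
    (hUR : U R = 0) (hUpos : ∀ r ∈ Ico 0 R, 0 < U r) :
    0 < μ := by
  by_contra! hμ
  have hflux : ∀ r ∈ Ioo 0 R, HasDerivAt (radialFlux R U) (-μ * (r * U r)) r := by
    intro r hr
    convert hasDerivAt_radialFlux hU2 hr using 1
    have := hUeq r hr
    field_simp [hr.1.ne'] at this
    linarith
  have hflux_mono := monotoneOn_Icc_of_hasDerivAt_nonneg (continuousOn_radialFlux hR hU1) hflux
    fun r hr ↦ mul_nonneg (neg_nonneg.2 hμ) (mul_pos hr.1 (hUpos r (Ioo_subset_Ico_self hr))).le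
  have hU'_nonneg : ∀ r ∈ Ioo 0 R, 0 ≤ deriv U r := by
    intro r hr
    have := hflux_mono (left_mem_Icc.2 hR.le) (Ioo_subset_Icc_self hr) hr.1.le
    rw [radialFlux_zero, radialFlux_of_mem_Ioo hr] at this
    exact nonneg_of_mul_nonneg_right this hr.1
  have hU_mono := monotoneOn_Icc_of_hasDerivAt_nonneg hU1.continuousOn
    (fun r hr ↦ ((hU2.contDiffAt (Ioo_mem_nhds hr.1 hr.2)).differentiableAt
      two_ne_zero).hasDerivAt) hU'_nonneg
  have := hU_mono (left_mem_Icc.2 hR.le) (right_mem_Icc.2 hR.le) hR.le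
  linarith [hUpos 0 ⟨le_rfl, hR⟩]

theorem lambda_upper_bound_general
    (R Λ : ℝ) (hR : 0 < R) (Φ : ℝ → ℝ)
    (hΦ : IsRadialSteadyState R Λ Φ)
    (μ : ℝ) (U : ℝ → ℝ)
    (hU1 : ContDiffOn ℝ 1 U (Set.Icc 0 R))
    (hU2 : ContDiffOn ℝ 2 U (Set.Ioo 0 R))
    (hUeq : ∀ r ∈ Set.Ioo (0:ℝ) R,
      -(deriv (deriv U) r) - deriv U r / r = μ * U r)
    (hUR : U R = 0)
    (hUpos : ∀ r ∈ Set.Ico (0:ℝ) R, 0 < U r) :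
    Λ ≤ 1 + μ := by
  obtain ⟨hΦ2, hΦeq, -, hΦR⟩ := hΦ
  have hμ := pos_of_radial_dirichlet_eigenfunction hR hU1 hU2 hUeq hUR hUpos
  by_contra! hlt
  set W := fun s ↦ radialFlux R Φ s * U s - Φ s * radialFlux R U s
  have hW' : ∀ r ∈ Ioo 0 R,
      HasDerivAt W (r * U r * ((1 + μ) * Φ r - Λ * Real.exp (Φ r))) r := by
    intro r hr
    convert hasDerivAt_radialWronskian (hΦ2.mono Ioo_subset_Icc_self) hU2 hr using 1
    have hΦr := hΦeq r hr
    have hUr := hUeq r hr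
    field_simp [hr.1.ne'] at hΦr hUr
    linear_combination (U r) * hΦr - (Φ r) * hUr
  have hW_anti : StrictAntiOn W (Icc 0 R) := by
    refine strictAntiOn_Icc_of_hasDerivAt_neg ?_ hW' fun r hr ↦ ?_
    · exact ((continuousOn_radialFlux hR (hΦ2.of_le one_le_two)).mul hU1.continuousOn).sub
        (hΦ2.continuousOn.mul (continuousOn_radialFlux hR hU1))
    · exact mul_neg_of_pos_of_neg (mul_pos hr.1 (hUpos r (Ioo_subset_Ico_self hr)))
        (sub_neg.2 (mul_lt_mul_exp_of_lt (by linarith) hlt _))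
  have := hW_anti (left_mem_Icc.2 hR.le) (right_mem_Icc.2 hR.le) hR
  simp [W, hΦR, hUR] at this

theorem lambda_upper_bound
    (R Λ : ℝ) (hR : 0 < R) (hΛ : 0 < Λ) (Φ : ℝ → ℝ)
    (hΦ : IsRadialSteadyState R Λ Φ)
    (μ : ℝ) (U : ℝ → ℝ)
    (hU1 : ContDiffOn ℝ 1 U (Set.Icc 0 R))
    (hU2 : ContDiffOn ℝ 2 U (Set.Ioo 0 R))
    (hUeq : ∀ r ∈ Set.Ioo (0:ℝ) R,
      -(deriv (deriv U) r) - deriv U r / r = μ * U r)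
    (hU0 : deriv U 0 = 0) (hUR : U R = 0)
    (hUpos : ∀ r ∈ Set.Ico (0:ℝ) R, 0 < U r) :
    Λ ≤ 1 + μ :=
  lambda_upper_bound_general R Λ hR Φ hΦ μ U hU1 hU2 hUeq hUR hUpos
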